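/- Let E_0, ..., E_n be distinct real numbers and let π_0, ..., π_n be strictly positive real numbers summing to 1. Then there exist real numbers β_1, ..., β_n and a normalization constant Z > 0 such that for every i, π_i = exp(-∑_{k=1}^n β_k E_i^k) / Z, where Z = ∑_{i=0}^n exp(-∑_{k=1}^n β_k E_i^k). -/

import Mathlib

/-!
Since the energies are distinct, Lagrange interpolation gives a polynomial `p` of degree at most
`n` with `p (E i) = log (π i)`. Taking `β k = -(coeff p k)` for `k ≥ 1` and `Z = exp (-(coeff p 0))`
gives `exp (-∑ β k E i ^ k) = π i * Z`, and summing over `i` shows that `Z` is the partition function.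
-/

open Finset Polynomial

theorem Polynomial.eval_eq_coeff_zero_add_sum_Icc {R : Type*} [Semiring R] {p : R[X]} {n : ℕ}
    (hp : p.natDegree ≤ n) (x : R) :
    p.eval x = p.coeff 0 + ∑ k ∈ Icc 1 n, p.coeff k * x ^ k := by
  rw [eval_eq_sum_range' (Nat.lt_succ_of_le hp), range_eq_Ico,
    sum_eq_sum_Ico_succ_bot n.succ_pos, pow_zero, mul_one, zero_add, Nat.succ_eq_add_one,
    Ico_add_one_right_eq_Icc]

theorem exists_natDegree_le_eval_eq {F : Type*} [Field F] {n : ℕ} {v : Fin (n + 1) → F}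
    (hv : Function.Injective v) (r : Fin (n + 1) → F) :
    ∃ p : F[X], p.natDegree ≤ n ∧ ∀ i, p.eval (v i) = r i := by
  classical
  refine ⟨Lagrange.interpolate univ v r, ?_,
    fun i ↦ Lagrange.eval_interpolate_at_node r hv.injOn (mem_univ i)⟩
  have := Lagrange.degree_interpolate_lt (s := univ) r hv.injOn
  rw [card_univ, Fintype.card_fin] at this
  exact natDegree_le_of_degree_le (Order.le_of_lt_succ this)

theorem eq_sum_and_eq_div_of_eq_mul {ι K : Type*} [Fintype ι] [Field K] {π g : ι → K} {Z : K}
    (hZ : Z ≠ 0) (hsum : ∑ i, π i = 1) (hg : ∀ i, g i = π i * Z) :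
    Z = ∑ i, g i ∧ ∀ i, π i = g i / Z := by
  refine ⟨by simp_rw [hg, ← sum_mul, hsum, one_mul], fun i ↦ ?_⟩
  rw [hg, mul_div_cancel_right₀ _ hZ]

theorem exponential_representation_discrete (n : ℕ) (E : Fin (n + 1) → ℝ)
    (hE : Function.Injective E) (π : Fin (n + 1) → ℝ)
    (hπ : ∀ i, 0 < π i) (hsum : ∑ i, π i = 1) :
    ∃ β : ℕ → ℝ, ∃ Z : ℝ, 0 < Z ∧
      Z = ∑ i, Real.exp (-∑ k ∈ Finset.Icc 1 n, β k * E i ^ k) ∧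
      ∀ i, π i = Real.exp (-∑ k ∈ Finset.Icc 1 n, β k * E i ^ k) / Z := by
  obtain ⟨p, hdeg, hp⟩ := exists_natDegree_le_eval_eq hE fun i ↦ Real.log (π i)
  refine ⟨fun k ↦ -p.coeff k, Real.exp (-p.coeff 0), Real.exp_pos _,
    eq_sum_and_eq_div_of_eq_mul (Real.exp_pos _).ne' hsum fun i ↦ ?_⟩
  have hlog := p.eval_eq_coeff_zero_add_sum_Icc hdeg (E i)
  rw [hp i] at hlog
  calc Real.exp (-∑ k ∈ Icc 1 n, -p.coeff k * E i ^ k)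
      = Real.exp (Real.log (π i) + -p.coeff 0) := by
        simp only [neg_mul, sum_neg_distrib, neg_neg]
        congr 1
        linarith
    _ = π i * Real.exp (-p.coeff 0) := by rw [Real.exp_add, Real.exp_log (hπ i)]
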